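/- Fix 0 < a < 1. For every x satisfying L_a ≤ x < 0 and −(1/2)·((1−a)/(6a+2))^{(1−a)/(2a)} ≤ x, the branch ψ₋₁ satisfies the two-sided bound log(−2x)/(1−a) + (1/(1−a))·(−2x)^{2a/(1−a)} ≤ ψ₋₁(a,x) ≤ log(−2x)/(1−a) + (2/(1−a))·(−2x)^{2a/(1−a)}. -/

import Mathlib

/-- `f(a,w) = sinh(a·w)·e^w`. -/
noncomputable def fab (a w : ℝ) : ℝ := Real.sinh (a * w) * Real.exp w

/-- `M_a = (1/(2a))·log((1−a)/(1+a))`. -/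
noncomputable def Ma (a : ℝ) : ℝ := (1 / (2 * a)) * Real.log ((1 - a) / (1 + a))

/-- `L_a = −(a/√(1−a²))·((1−a)/(1+a))^{1/(2a)}`. -/
noncomputable def La (a : ℝ) : ℝ :=
  -(a / Real.sqrt (1 - a ^ 2)) * ((1 - a) / (1 + a)) ^ (1 / (2 * a))


open Real Set

/-!
Put `u = -2x` and `t = u ^ (2a/(1-a))`. Since `f(a,w) = e^{(1-a)w} (e^{2aw} - 1) / 2`,
at `w_c = (log u + c t)/(1-a)` one gets `f(a, w_c) = (u/2) e^{ct} (t e^{2act/(1-a)} - 1)`,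
while `x = -u/2`. As `f(a,·)` is strictly decreasing on `(-∞, M_a]`, it suffices to show
`f(a, w₂) ≤ x ≤ f(a, w₁)` and `w₂ ≤ M_a`. For `c = 1` this is `e^t (1 - t) ≤ 1`. For `c = 2`,
with `s = 4at/(1-a)`, the bounds `e^s ≤ 1/(1-s)` and `1 - e^{-2t} ≥ 2t/(1+2t)` give
`t e^s ≤ 1 - e^{-2t}` as soon as `2s + 2t ≤ 1`, which is exactly `t (6a+2) ≤ 1 - a`,
i.e. the lower bound imposed on `x`.
-/

theorem fab_eq_exp_mul (a w : ℝ) :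
    fab a w = exp ((1 - a) * w) * (exp (2 * a * w) - 1) / 2 := by
  have h1 : exp ((1 - a) * w) * exp (2 * a * w) = exp (a * w) * exp w := by
    rw [← exp_add, ← exp_add]; ring_nf
  have h2 : exp ((1 - a) * w) = exp (-(a * w)) * exp w := by
    rw [← exp_add]; ring_nf
  rw [fab, sinh_eq, mul_sub, h1, h2]
  ring

theorem hasDerivAt_fab (a w : ℝ) :
    HasDerivAt (fab a) (exp ((1 - a) * w) * ((1 + a) * exp (2 * a * w) - (1 - a)) / 2) w := by
  have h₁ : HasDerivAt (fun w => exp ((1 - a) * w)) (exp ((1 - a) * w) * (1 - a)) w := by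
    simpa using ((hasDerivAt_id w).const_mul (1 - a)).exp
  have h₂ : HasDerivAt (fun w => exp (2 * a * w) - 1) (exp (2 * a * w) * (2 * a)) w := by
    simpa using ((hasDerivAt_id w).const_mul (2 * a)).exp.sub_const 1
  rw [show fab a = _ from funext (fab_eq_exp_mul a)]
  exact ((h₁.fun_mul h₂).div_const 2).congr_deriv (by ring)

theorem le_Ma_iff {a w : ℝ} (ha0 : 0 < a) (ha1 : a < 1) :
    w ≤ Ma a ↔ (1 + a) * exp (2 * a * w) ≤ 1 - a := by
  rw [Ma, one_div_mul_eq_div, le_div_iff₀ (by positivity), mul_comm,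
    le_log_iff_exp_le (by apply div_pos <;> linarith), le_div_iff₀ (by linarith), mul_comm]

theorem lt_Ma_iff {a w : ℝ} (ha0 : 0 < a) (ha1 : a < 1) :
    w < Ma a ↔ (1 + a) * exp (2 * a * w) < 1 - a := by
  rw [Ma, one_div_mul_eq_div, lt_div_iff₀ (by positivity), mul_comm,
    lt_log_iff_exp_lt (by apply div_pos <;> linarith), lt_div_iff₀ (by linarith), mul_comm]

theorem strictAntiOn_fab {a : ℝ} (ha0 : 0 < a) (ha1 : a < 1) :
    StrictAntiOn (fab a) (Iic (Ma a)) := by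
  refine strictAntiOn_of_deriv_neg (convex_Iic _)
    (fun w _ => (hasDerivAt_fab a w).continuousAt.continuousWithinAt) fun w hw => ?_
  rw [interior_Iic, mem_Iio, lt_Ma_iff ha0 ha1] at hw
  rw [(hasDerivAt_fab a w).deriv]
  have := exp_pos ((1 - a) * w)
  apply div_neg_of_neg_of_pos _ two_pos
  nlinarith

theorem fab_log_add_div {a u : ℝ} (ha1 : a < 1) (hu : 0 < u) (y : ℝ) :
    fab a ((log u + y) / (1 - a)) =
      u * exp y * (u ^ (2 * a / (1 - a)) * exp (2 * a / (1 - a) * y) - 1) / 2 := by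
  have ha : 1 - a ≠ 0 := by linarith
  rw [fab_eq_exp_mul, mul_div_cancel₀ _ ha, exp_add, exp_log hu, rpow_def_of_pos hu, ← exp_add]
  congr 4
  field_simp

theorem exp_two_mul_log_add_div {a u : ℝ} (hu : 0 < u) (y : ℝ) :
    exp (2 * a * ((log u + y) / (1 - a))) = u ^ (2 * a / (1 - a)) * exp (2 * a / (1 - a) * y) := by
  rw [rpow_def_of_pos hu, ← exp_add]
  congr 1
  ring

theorem exp_mul_one_sub_le_one (t : ℝ) : exp t * (1 - t) ≤ 1 := by
  have := mul_le_mul_of_nonneg_left (one_sub_le_exp_neg t) (exp_pos t).le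
  rwa [← exp_add, add_neg_cancel, exp_zero] at this

theorem div_one_add_le_one_sub_exp_neg {z : ℝ} (hz : 0 ≤ z) : z / (1 + z) ≤ 1 - exp (-z) := by
  have h : exp (-z) ≤ (1 + z)⁻¹ := by
    rw [exp_neg]; exact inv_anti₀ (by linarith) (by linarith [add_one_le_exp z])
  have : z / (1 + z) = 1 - (1 + z)⁻¹ := by field_simp; ring
  linarith

theorem mul_exp_le_two_mul_div {s t : ℝ} (hs : 0 ≤ s) (ht : 0 ≤ t) (h : 2 * s + 2 * t ≤ 1) :
    t * exp s ≤ 2 * t / (1 + 2 * t) := by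
  have hexp : exp s ≤ 2 / (1 + 2 * t) := calc
    exp s ≤ 1 / (1 - s) := exp_bound_div_one_sub_of_interval hs (by linarith)
    _ ≤ 2 / (1 + 2 * t) := by
      rw [div_le_div_iff₀ (by linarith) (by linarith)]; linarith
  calc t * exp s ≤ t * (2 / (1 + 2 * t)) := mul_le_mul_of_nonneg_left hexp ht
    _ = 2 * t / (1 + 2 * t) := by ring

theorem mul_exp_le_two_mul_div_of_mul_le {a t : ℝ} (ha0 : 0 ≤ a) (ha1 : a < 1) (ht : 0 ≤ t)
    (h : t * (6 * a + 2) ≤ 1 - a) :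
    t * exp (2 * a / (1 - a) * (2 * t)) ≤ 2 * t / (1 + 2 * t) := by
  have ha : 0 < 1 - a := by linarith
  refine mul_exp_le_two_mul_div (by positivity) ht ?_
  have key : 2 * (2 * a / (1 - a) * (2 * t)) + 2 * t
      = 1 - (1 - a - t * (6 * a + 2)) / (1 - a) := by
    field_simp
    ring
  linarith [div_nonneg (sub_nonneg.mpr h) ha.le]

theorem neg_half_le_fab_log_add_rpow {a u : ℝ} (ha0 : 0 ≤ a) (ha1 : a < 1) (hu : 0 < u) :
    -u / 2 ≤ fab a ((log u + u ^ (2 * a / (1 - a))) / (1 - a)) := by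
  set t := u ^ (2 * a / (1 - a))
  have ht : 0 < t := by positivity
  have hexp : 1 ≤ exp (2 * a / (1 - a) * t) := one_le_exp (by apply mul_nonneg <;> bound)
  have hle : t - 1 ≤ t * exp (2 * a / (1 - a) * t) - 1 := by
    linarith [le_mul_of_one_le_right ht.le hexp]
  rw [fab_log_add_div ha1 hu]
  nlinarith [exp_mul_one_sub_le_one t, mul_le_mul_of_nonneg_left hle (mul_pos hu (exp_pos t)).le]

theorem fab_log_add_two_mul_rpow_le_neg_half {a u : ℝ} (ha0 : 0 ≤ a) (ha1 : a < 1) (hu : 0 < u)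
    (h : u ^ (2 * a / (1 - a)) * (6 * a + 2) ≤ 1 - a) :
    fab a ((log u + 2 * u ^ (2 * a / (1 - a))) / (1 - a)) ≤ -u / 2 := by
  set t := u ^ (2 * a / (1 - a))
  have ht : 0 < t := by positivity
  have hle : t * exp (2 * a / (1 - a) * (2 * t)) - 1 ≤ -exp (-(2 * t)) := by
    linarith [mul_exp_le_two_mul_div_of_mul_le ha0 ha1 ht.le h,
      div_one_add_le_one_sub_exp_neg (by positivity : 0 ≤ 2 * t)]
  have hcancel : exp (2 * t) * exp (-(2 * t)) = 1 := by rw [← exp_add, add_neg_cancel, exp_zero]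
  rw [fab_log_add_div ha1 hu]
  nlinarith [mul_le_mul_of_nonneg_left hle (mul_pos hu (exp_pos (2 * t))).le]

theorem log_add_two_mul_rpow_div_le_Ma {a u : ℝ} (ha0 : 0 < a) (ha1 : a < 1) (hu : 0 < u)
    (h : u ^ (2 * a / (1 - a)) * (6 * a + 2) ≤ 1 - a) :
    (log u + 2 * u ^ (2 * a / (1 - a))) / (1 - a) ≤ Ma a := by
  set t := u ^ (2 * a / (1 - a))
  have ht : 0 < t := by positivity
  have h2t : 2 * t / (1 + 2 * t) ≤ 2 * t := div_le_self (by positivity) (by linarith)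
  rw [le_Ma_iff ha0 ha1, exp_two_mul_log_add_div hu]
  nlinarith [mul_exp_le_two_mul_div_of_mul_le ha0.le ha1 ht.le h]

/-- Two-sided bounds for `ψ₋₁(a,x)` when
`max(L_a, −(1/2)((1−a)/(6a+2))^{(1−a)/(2a)}) ≤ x < 0`. -/
theorem stmt_18 (a x : ℝ) (ha0 : 0 < a) (ha1 : a < 1) (psi1 : ℝ → ℝ)
    (hpsi1 : ∀ t, La a ≤ t → t < 0 → psi1 t ≤ Ma a ∧ fab a (psi1 t) = t)
    (hxL : La a ≤ x) (hx0 : x < 0)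
    (hx : -(1/2) * ((1 - a) / (6 * a + 2)) ^ ((1 - a) / (2 * a)) ≤ x) :
    Real.log (-2 * x) / (1 - a) + (1 / (1 - a)) * (-2 * x) ^ (2 * a / (1 - a))
        ≤ psi1 x ∧
    psi1 x ≤ Real.log (-2 * x) / (1 - a)
        + (2 / (1 - a)) * (-2 * x) ^ (2 * a / (1 - a)) := by
  obtain ⟨hψM, hψ⟩ := hpsi1 x hxL hx0
  have hu : 0 < -2 * x := by linarith
  have hk : 0 < 2 * a / (1 - a) := div_pos (by linarith) (by linarith)
  have ht : (-2 * x) ^ (2 * a / (1 - a)) * (6 * a + 2) ≤ 1 - a := by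
    rw [← le_div_iff₀ (by linarith), ← le_rpow_inv_iff_of_pos hu.le (by bound) hk, inv_div]
    linarith
  have hψ' : fab a (psi1 x) = -(-2 * x) / 2 := by rw [hψ]; ring
  have hupM := log_add_two_mul_rpow_div_le_Ma ha0 ha1 hu ht
  have hlowM : (log (-2 * x) + (-2 * x) ^ (2 * a / (1 - a))) / (1 - a) ≤ Ma a :=
    hupM.trans' (div_le_div_of_nonneg_right (by linarith [rpow_pos_of_pos hu (2 * a / (1 - a))])
      (by linarith))
  have hanti := strictAntiOn_fab ha0 ha1
  constructor
  · exact Eq.trans_le (by ring)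
      ((hanti.le_iff_ge hψM hlowM).mp (hψ' ▸ neg_half_le_fab_log_add_rpow ha0.le ha1 hu))
  · exact LE.le.trans_eq ((hanti.le_iff_ge hupM hψM).mp
      (hψ' ▸ fab_log_add_two_mul_rpow_le_neg_half ha0.le ha1 hu ht)) (by ring)
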